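/- arXiv:1703.06219 — 5 statements merged into one kernel-verified Lean document; each statement's English description precedes it below -/
import Mathlib

section
/- Let F be a field of characteristic ≠ 3 and T(X) = X^3 + eX^2 + fX + g with g ≠ 0, -27g^2 - 2f^3 + 9efg ≠ 0, and 3eg = f^2. Then T(X) is irreducible over F if and only if the polynomial X^3 - a is irreducible over F, where a = 27g^3/(f^3 - 27g^2). -/
open Polynomial

theorem stmt1 {F : Type*} [Field F] (h3 : (3 : F) ≠ 0) (e f g : F) (hg : g ≠ 0)
    (h : -27 * g ^ 2 - 2 * f ^ 3 + 9 * e * f * g ≠ 0) (hef : 3 * e * g = f ^ 2) :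
    Irreducible (X ^ 3 + C e * X ^ 2 + C f * X + C g : F[X]) ↔
      Irreducible (X ^ 3 - C (27 * g ^ 3 / (f ^ 3 - 27 * g ^ 2)) : F[X]) := by
  have h27 : (27 : F) ≠ 0 := by
    intro hc
    apply h3
    have h33 : (3 : F) ^ 3 = 0 := by rw [show (3:F)^3 = 27 by norm_num, hc]
    exact pow_eq_zero_iff (n := 3) (by norm_num) |>.mp h33
  have hfg : f ^ 3 - 27 * g ^ 2 ≠ 0 := by
    intro hc; apply h; linear_combination hc + 3 * f * hef
  have key : ∀ (p : F[X]), p.natDegree = 3 → (Irreducible p ↔ ∀ x : F, p.eval x ≠ 0) := by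
    intro p hdeg
    have hp0 : p ≠ 0 := fun hp => by simp [hp] at hdeg
    rw [irreducible_iff_roots_eq_zero_of_degree_le_three (by omega) (by omega),
      Multiset.eq_zero_iff_forall_notMem]
    simp [mem_roots hp0, IsRoot]
  have hdT : (X ^ 3 + C e * X ^ 2 + C f * X + C g : F[X]).natDegree = 3 := by
    compute_degree!
  have hdA : (X ^ 3 - C (27 * g ^ 3 / (f ^ 3 - 27 * g ^ 2)) : F[X]).natDegree = 3 := by
    compute_degree!
  rw [key _ hdT, key _ hdA]
  simp only [eval_add, eval_sub, eval_mul, eval_pow, eval_X, eval_C]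
  constructor
  · intro hT y hy
    rw [sub_eq_zero] at hy
    have hy0 : y ^ 3 * (f ^ 3 - 27 * g ^ 2) = 27 * g ^ 3 := by
      field_simp at hy; linear_combination hy
    have hd : 3 * g - f * y ≠ 0 := by
      intro hc
      have h729 : (729 : F) * g ^ 5 = 0 := by
        linear_combination (-(f^3)) * hy0 +
          (243*g^4 + 81*f*g^3*y + 27*f^2*g^2*y^2 - 9*f^3*g^2 - 3*f^4*g*y - f^5*y^2) * hc
      have h729ne : (729 : F) ≠ 0 := by
        intro hc'
        exact h27 (mul_self_eq_zero.mp (by linear_combination hc' : (27:F)*(27:F) = 0))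
      rcases mul_eq_zero.mp h729 with h1 | h2
      · exact h729ne h1
      · exact hg (pow_eq_zero_iff (n := 5) (by norm_num) |>.mp h2)
    set u := 3 * g * y / (3 * g - f * y) with hu_def
    have hu : u * (3 * g - f * y) = 3 * g * y := by
      rw [hu_def]; exact div_mul_cancel₀ _ hd
    apply hT u
    have hmain : (u ^ 3 + e * u ^ 2 + f * u + g) * (3 * g - f * y) ^ 3 = 0 := by
      linear_combination ((u * (3*g - f*y))^2 + (u * (3*g - f*y)) * (3*g*y) + (3*g*y)^2
          + e * (u * (3*g - f*y) + 3*g*y) * (3*g - f*y) + f * (3*g - f*y)^2) * hu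
        + (-g) * hy0 + (9*g^2*y^2 - 3*f*g*y^3) * hef
    exact (mul_eq_zero.mp hmain).resolve_right (pow_ne_zero 3 hd)
  · intro hA x hx
    have hc : f * x + 3 * g ≠ 0 := by
      intro hc
      have hkey : g * (f ^ 3 - 27 * g ^ 2) = 0 := by
        linear_combination f^3 * hx -
          (9*g^2 - 3*f*g*x + f^2*x^2 + f^3 - 3*e*f*g + e*f^2*x) * hc - 3*f*g * hef
      rcases mul_eq_zero.mp hkey with h1 | h2
      · exact hg h1
      · exact hfg h2
    set u := 3 * g * x / (f * x + 3 * g) with hu_def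
    have hu : u * (f * x + 3 * g) = 3 * g * x := by
      rw [hu_def]; exact div_mul_cancel₀ _ hc
    apply hA u
    rw [sub_eq_zero, eq_div_iff hfg]
    have hmain : (u ^ 3 * (f ^ 3 - 27 * g ^ 2) - 27 * g ^ 3) * (f * x + 3 * g) ^ 3 = 0 := by
      linear_combination ((u * (f*x + 3*g))^2 + (u * (f*x + 3*g)) * (3*g*x) + (3*g*x)^2)
          * (f^3 - 27*g^2) * hu
        + (-729*g^5) * hx + (243*g^4*x^2) * hef
    have := (mul_eq_zero.mp hmain).resolve_right (pow_ne_zero 3 hc)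
    linear_combination this
end

section
/- Let F be a field of characteristic 3 and T(X) = X^3 + fX + g with f ≠ 0 and g ≠ 0. Then T(X) is irreducible over F if and only if G(X) = X^3 + aX + a^2 is irreducible over F, where a = g^2/f^3. The roots correspond via y = (g/f^2)·x. -/
open Polynomial

lemma natdeg3' {F : Type*} [Field F] (b c : F) :
    (X ^ 3 + C b * X + C c : F[X]).natDegree = 3 := by
  compute_degree!

lemma irred_iff_no_root {F : Type*} [Field F] (b c : F) :
    Irreducible (X ^ 3 + C b * X + C c : F[X]) ↔
      ∀ x : F, ¬ (X ^ 3 + C b * X + C c : F[X]).IsRoot x := by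
  have h0 : (X ^ 3 + C b * X + C c : F[X]) ≠ 0 := fun h => by
    simpa [h] using natdeg3' b c
  rw [irreducible_iff_roots_eq_zero_of_degree_le_three
    (by rw [natdeg3']; norm_num) (by rw [natdeg3'])]
  rw [Multiset.eq_zero_iff_forall_notMem]
  simp [mem_roots, h0]

theorem stmt2 {F : Type*} [Field F] [CharP F 3] (f g : F) (hf : f ≠ 0) (hg : g ≠ 0) :
    (Irreducible (X ^ 3 + C f * X + C g : F[X]) ↔
      Irreducible (X ^ 3 + C (g ^ 2 / f ^ 3) * X + C ((g ^ 2 / f ^ 3) ^ 2) : F[X])) ∧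
    ∀ x : F, (X ^ 3 + C f * X + C g : F[X]).IsRoot x ↔
      (X ^ 3 + C (g ^ 2 / f ^ 3) * X + C ((g ^ 2 / f ^ 3) ^ 2) : F[X]).IsRoot (g / f ^ 2 * x) := by
  have key : ∀ x : F, (X ^ 3 + C f * X + C g : F[X]).IsRoot x ↔
      (X ^ 3 + C (g ^ 2 / f ^ 3) * X + C ((g ^ 2 / f ^ 3) ^ 2) : F[X]).IsRoot (g / f ^ 2 * x) := by
    intro x
    simp only [IsRoot, eval_add, eval_mul, eval_pow, eval_X, eval_C]
    have heq : (g / f ^ 2 * x) ^ 3 + g ^ 2 / f ^ 3 * (g / f ^ 2 * x) + (g ^ 2 / f ^ 3) ^ 2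
        = (g ^ 3 / f ^ 6) * (x ^ 3 + f * x + g) := by
      have h1 : f ^ 17 * f⁻¹ ^ 17 = 1 := by
        rw [← mul_pow, mul_inv_cancel₀ hf, one_pow]
      field_simp
    rw [heq, mul_eq_zero]
    have hne : g ^ 3 / f ^ 6 ≠ 0 := div_ne_zero (pow_ne_zero _ hg) (pow_ne_zero _ hf)
    tauto
  refine ⟨?_, key⟩
  rw [irred_iff_no_root, irred_iff_no_root]
  constructor
  · intro h y hy
    have hx : g / f ^ 2 * (f ^ 2 / g * y) = y := by field_simp
    exact h (f ^ 2 / g * y) ((key _).mpr (by rwa [hx]))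
  · intro h x hx
    exact h (g / f ^ 2 * x) ((key x).mp hx)
end

section
/- Let F be a field of characteristic ≠ 3 and let L/F be a cubic field extension with a generator y satisfying y^3 - 3y = a for some a ∈ F. If the polynomial X^2 + aX + 1 has a root c ∈ F, then u = (cy - 1)/(y - c) is an element of L satisfying u^3 = c, and u generates L over F (so L/F is purely cubic). -/
open Polynomial

lemma aux_ne {F L : Type*} [Field F] [Field L] [Algebra F L]
    (hdim : Module.finrank F L = 3) (z : L) (hz : Algebra.adjoin F {z} = ⊤) (b : F) :
    z ≠ algebraMap F L b := by
  intro h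
  have hb : Algebra.adjoin F {z} ≤ ⊥ := by
    rw [Algebra.adjoin_le_iff]
    intro x hx
    rw [Set.mem_singleton_iff.1 hx, h]
    exact ⟨b, rfl⟩
  have : (⊥ : Subalgebra F L) = ⊤ := le_antisymm bot_le (hz ▸ hb)
  have h1 := Subalgebra.bot_eq_top_iff_finrank_eq_one.1 this
  rw [hdim] at h1
  exact (by norm_num : (3 : ℕ) ≠ 1) h1

theorem stmt3 {F L : Type*} [Field F] [Field L] [Algebra F L] (h3 : (3 : F) ≠ 0)
    (y : L) (a : F) (hdim : Module.finrank F L = 3)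
    (hgen : Algebra.adjoin F {y} = ⊤)
    (hy : y ^ 3 - 3 * y = algebraMap F L a)
    (c : F) (hc : c ^ 2 + a * c + 1 = 0) :
    y - algebraMap F L c ≠ 0 ∧
      ((algebraMap F L c * y - 1) / (y - algebraMap F L c)) ^ 3 = algebraMap F L c ∧
      Algebra.adjoin F {(algebraMap F L c * y - 1) / (y - algebraMap F L c)} = ⊤ := by
  set c' : L := algebraMap F L c with hc'
  set a' : L := algebraMap F L a with ha'
  have hyc : y - c' ≠ 0 := sub_ne_zero.2 (aux_ne hdim y hgen c)
  have hcL : c' ^ 2 + a' * c' + 1 = 0 := by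
    have := congrArg (algebraMap F L) hc
    push_cast [map_add, map_mul, map_pow, map_one, map_zero] at this
    simpa using this
  set u : L := (c' * y - 1) / (y - c') with hu
  have hu3 : u ^ 3 = c' := by
    rw [hu, div_pow, div_eq_iff (pow_ne_zero 3 hyc)]
    have key : (c' * y - 1) ^ 3 - c' * (y - c') ^ 3
        = (c' ^ 3 - c') * (y ^ 3 - 3 * y - a') + (c' ^ 2 - 1) * (c' ^ 2 + a' * c' + 1) := by
      ring
    have : (c' * y - 1) ^ 3 - c' * (y - c') ^ 3 = 0 := by
      rw [key, hy, hcL]; ring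
    linear_combination this
  refine ⟨hyc, hu3, ?_⟩
  -- u ≠ c'
  have huc : u ≠ c' := by
    intro h
    have h1 : c' * y - 1 = c' * (y - c') := by
      rw [hu, div_eq_iff hyc] at h
      linear_combination h
    have hc2 : c' ^ 2 = 1 := by linear_combination h1
    have hc2F : c ^ 2 = 1 := by
      have := (algebraMap F L).injective
      apply this
      push_cast [map_pow, map_one]
      exact hc2
    have hcne : c ≠ 0 := by intro h0; rw [h0] at hc2F; simp at hc2F
    have haF : a = -2 * c := by
      have : c * (a + 2 * c) = 0 := by linear_combination hc + (1 + 1 : F) * hc2F - hc2F - hc2F + hc2F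
      rcases mul_eq_zero.1 this with h' | h'
      · exact absurd h' hcne
      · linear_combination h'
    -- y^3 - 3y + 2c' = (y - c')^2 * (y + 2c') = 0
    have hfac : (y - c') ^ 2 * (y + 2 * c') = 0 := by
      have ha'L : a' = -2 * c' := by
        rw [ha', hc', haF]; push_cast [map_mul, map_neg, map_ofNat]; ring
      have h2 : y ^ 3 - 3 * y = -2 * c' := by rw [hy]; exact ha'L
      linear_combination h2 + (-3 * y + 2 * c') * hc2
    rcases mul_eq_zero.1 hfac with h' | h'
    · exact (pow_ne_zero 2 hyc) h'
    · have : y = algebraMap F L (-2 * c) := by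
        push_cast [map_mul, map_neg, map_ofNat]
        linear_combination h'
      exact aux_ne hdim y hgen (-2 * c) this
  -- y = (u * c' - 1) / (u - c')
  have hucne : u - c' ≠ 0 := sub_ne_zero.2 huc
  have hyu : y * (u - c') = u * c' - 1 := by
    have h1 : u * (y - c') = c' * y - 1 := by rw [hu, div_mul_cancel₀ _ hyc]
    linear_combination h1
  -- finiteness for inv_mem
  have hfd : FiniteDimensional F L := FiniteDimensional.of_finrank_pos (by omega)
  have halg : Algebra.IsAlgebraic F L := Algebra.IsAlgebraic.of_finite F L
  apply le_antisymm le_top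
  rw [← hgen, Algebra.adjoin_le_iff]
  intro x hx
  rw [Set.mem_singleton_iff.1 hx]
  set A := Algebra.adjoin F {u} with hA
  have huA : u ∈ A := Algebra.self_mem_adjoin_singleton F u
  have hcA : c' ∈ A := A.algebraMap_mem c
  have hdA : u - c' ∈ A := A.sub_mem huA hcA
  have hinv : (u - c')⁻¹ ∈ A :=
    A.inv_mem_of_algebraic (x := ⟨u - c', hdA⟩) (Algebra.IsAlgebraic.isAlgebraic _)
  have : y = (u * c' - 1) * (u - c')⁻¹ := by
    field_simp
    linear_combination hyu
  rw [this]
  exact A.mul_mem (A.sub_mem (A.mul_mem huA hcA) A.one_mem) hinv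
end

section
/- Let F be a field of characteristic ≠ 3 not containing a primitive cube root of unity, and let L/F be a Galois cubic extension with generator y. If σ generates Gal(L/F), then there exists a generator z of L/F with σ(z) = -1/(z - 1), and z satisfies z^3 + a·z^2 - (a+3)·z + 1 = 0 where a = -(z^3 - 3z + 1)/(z(z-1)) ∈ F. -/
open Polynomial IntermediateField

theorem stmt11 {F L : Type*} [Field F] [Field L] [Algebra F L] (h3 : (3 : F) ≠ 0)
    (hnoξ : Irreducible (X ^ 2 + X + 1 : F[X]))
    [IsGalois F L] (hdim : Module.finrank F L = 3)
    (σ : L ≃ₐ[F] L) (hσ : ∀ τ : L ≃ₐ[F] L, τ ∈ Subgroup.zpowers σ) :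
    ∃ z : L, Algebra.adjoin F {z} = ⊤ ∧ σ z = -1 / (z - 1) ∧
      ∃ a : F, algebraMap F L a = -(z ^ 3 - 3 * z + 1) / (z * (z - 1)) ∧
        z ^ 3 + algebraMap F L a * z ^ 2 - algebraMap F L (a + 3) * z + 1 = 0 := by
  have hFD : FiniteDimensional F L :=
    Module.finite_of_finrank_pos (by rw [hdim]; norm_num)
  -- X^2+X+1 has no root in F
  have hroot : ∀ c : F, c ^ 2 + c + 1 ≠ 0 := by
    intro c hc
    have hd : IsRoot (X ^ 2 + X + 1 : F[X]) c := by
      simp [IsRoot, hc]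
    obtain ⟨q, hq⟩ := (dvd_iff_isRoot.2 hd)
    rcases hnoξ.2 hq with h | h
    · exact (Polynomial.not_isUnit_of_degree_pos _ (by simp [degree_X_sub_C])) h
    · have h2 : (X ^ 2 + X + 1 : F[X]).natDegree = 2 := by compute_degree!
      have h1 : (X - C c : F[X]).natDegree = 1 := natDegree_X_sub_C c
      have h0 : q.natDegree = 0 := natDegree_eq_zero_of_isUnit h
      have hq0 : q ≠ 0 := by
        intro hq0
        rw [hq0, mul_zero] at hq
        rw [hq] at h2
        simp at h2
      have : (X ^ 2 + X + 1 : F[X]).natDegree = 1 := by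
        rw [hq, natDegree_mul (X_sub_C_ne_zero c) hq0, h1, h0]
      omega
  -- Galois group has order 3
  have hcard : Fintype.card (L ≃ₐ[F] L) = 3 := by
    rw [← Nat.card_eq_fintype_card, IsGalois.card_aut_eq_finrank, hdim]
  have hσ1 : σ ≠ 1 := by
    intro h1
    have hall : ∀ τ : L ≃ₐ[F] L, τ = 1 := by
      intro τ
      obtain ⟨k, hk⟩ := Subgroup.mem_zpowers_iff.1 (hσ τ)
      rw [← hk, h1, one_zpow]
    have := Fintype.card_le_one_iff.2 (fun a b => (hall a).trans (hall b).symm)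
    omega
  have hσ3 : σ ^ 3 = 1 := by
    have := pow_card_eq_one (G := L ≃ₐ[F] L) (x := σ)
    rwa [hcard] at this
  have hσ3' : ∀ x : L, σ (σ (σ x)) = x := by
    intro x
    have : (σ ^ 3) x = (1 : L ≃ₐ[F] L) x := by rw [hσ3]
    simpa [pow_succ, AlgEquiv.mul_apply] using this
  -- pick w not fixed by σ
  obtain ⟨w, hw⟩ : ∃ w : L, σ w ≠ w := by
    by_contra h
    push_neg at h
    exact hσ1 (AlgEquiv.ext fun x => h x)
  set s := σ w with hs
  set t := σ s with ht
  have hts : t ≠ s := fun h => hw (σ.injective h)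
  have hσt : σ t = w := hσ3' w
  have hwt : t ≠ w := by
    intro h
    have h2 : σ t = σ w := by rw [h]
    rw [hσt] at h2
    exact hw h2.symm
  have hts0 : t - s ≠ 0 := sub_ne_zero.2 hts
  have hws0 : w - s ≠ 0 := sub_ne_zero.2 (fun h => hw h.symm)
  have hwt0 : w - t ≠ 0 := sub_ne_zero.2 (fun h => hwt h.symm)
  set z : L := (w - s) / (t - s) with hz
  have hz0 : z ≠ 0 := div_ne_zero hws0 hts0
  have hz1 : z - 1 = (w - t) / (t - s) := by
    rw [hz]
    field_simp
    ring
  have hz10 : z - 1 ≠ 0 := by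
    rw [hz1]
    exact div_ne_zero hwt0 hts0
  have hσz : σ z = -1 / (z - 1) := by
    have h1 : σ z = (s - t) / (w - t) := by
      rw [hz, map_div₀, map_sub, map_sub, ← hs, ← ht, hσt]
    rw [h1, hz1]
    field_simp
    ring
  clear_value z
  clear hz hz1
  -- z is not in the base field
  have hzbot : z ∉ (⊥ : IntermediateField F L) := by
    intro hmem
    obtain ⟨c, hc⟩ := IntermediateField.mem_bot.1 hmem
    have hfix : σ z = z := by rw [← hc]; exact σ.commutes c
    have heq : z ^ 2 - z + 1 = 0 := by
      have := hσz
      rw [hfix] at this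
      field_simp at this
      linear_combination this
    have : (-c) ^ 2 + (-c) + 1 = 0 := by
      apply (algebraMap F L).injective
      push_cast [map_add, map_pow, map_neg, map_one, map_zero, hc]
      linear_combination heq
    exact hroot (-c) this
  -- z generates L over F
  have hint : IsIntegral F z := IsIntegral.of_finite F z
  have hgen : Algebra.adjoin F {z} = ⊤ := by
    rw [← IntermediateField.adjoin_simple_toSubalgebra_of_isAlgebraic hint.isAlgebraic]
    have hmul : Module.finrank F F⟮z⟯ * Module.finrank F⟮z⟯ L = 3 := by
      rw [Module.finrank_mul_finrank, hdim]
    have hdvd : Module.finrank F F⟮z⟯ ∣ 3 := ⟨_, hmul.symm⟩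
    have hne1 : Module.finrank F F⟮z⟯ ≠ 1 := by
      intro h1
      exact hzbot (IntermediateField.finrank_eq_one_iff.1 h1 ▸
        IntermediateField.mem_adjoin_simple_self F z)
    have hdeg3 : Module.finrank F F⟮z⟯ = 3 := by
      rcases (Nat.Prime.eq_one_or_self_of_dvd (by norm_num) _ hdvd) with h | h
      · exact absurd h hne1
      · exact h
    rw [← Algebra.toSubmodule_eq_top]
    apply Submodule.eq_top_of_finrank_eq
    rw [hdim]
    exact hdeg3
  have hkey : σ z * (z - 1) = -1 := by
    rw [hσz]
    field_simp
  have hσ2key : σ (σ z) * (σ z - 1) = -1 := by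
    have h5 := congrArg σ hkey
    rwa [map_mul, map_sub, map_one, map_neg, map_one] at h5
  have h4 : σ (σ z) * z = z - 1 := by
    linear_combination (σ (σ z)) * hkey - (z - 1) * hσ2key
  refine ⟨z, hgen, hσz, ?_⟩
  set α : L := -(z + σ z + σ (σ z)) with hα
  have hfixσ : σ α = α := by
    rw [hα, map_neg, map_add, map_add, hσ3' z]
    ring
  have hfixall : ∀ τ : L ≃ₐ[F] L, τ α = α := by
    have hn : ∀ n : ℕ, (σ ^ n) α = α := by
      intro n
      induction n with
      | zero => simp
      | succ k ih => rw [pow_succ', AlgEquiv.mul_apply, ih]; exact hfixσ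
    intro τ
    obtain ⟨k, hk⟩ := Subgroup.mem_zpowers_iff.1 (hσ τ)
    rw [← hk]
    rcases k with n | n
    · simpa using hn n
    · show ((σ ^ (n + 1 : ℕ))⁻¹ : L ≃ₐ[F] L) α = α
      apply (σ ^ (n + 1 : ℕ)).injective
      rw [← AlgEquiv.mul_apply, mul_inv_cancel, AlgEquiv.one_apply, hn]
  have hαbot : α ∈ (⊥ : IntermediateField F L) := by
    have htop : (⊥ : IntermediateField F L).fixingSubgroup = ⊤ := by
      rw [Subgroup.eq_top_iff']
      intro g
      rw [IntermediateField.mem_fixingSubgroup_iff]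
      intro y hy
      obtain ⟨c, hc⟩ := IntermediateField.mem_bot.1 hy
      rw [← hc]
      exact g.commutes c
    have hff := IsGalois.fixedField_fixingSubgroup (⊥ : IntermediateField F L)
    rw [htop] at hff
    rw [← hff]
    exact fun g => hfixall g
  obtain ⟨a, ha⟩ := IntermediateField.mem_bot.1 hαbot
  have haval : algebraMap F L a = -(z ^ 3 - 3 * z + 1) / (z * (z - 1)) := by
    rw [ha, hα, eq_div_iff (mul_ne_zero hz0 hz10)]
    linear_combination (-z) * hkey - (z - 1) * h4
  refine ⟨a, haval, ?_⟩
  have hA : algebraMap F L a * (z * (z - 1)) = -(z ^ 3 - 3 * z + 1) := by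
    rw [haval, div_mul_cancel₀ _ (mul_ne_zero hz0 hz10)]
  rw [map_add, map_ofNat]
  linear_combination hA
end

section
/- Let F be a field of characteristic ≠ 3 and z a root of the irreducible polynomial X^3 + aX^2 - (a+3)X + 1 over F (a Shanks cubic). Then w = (3 + a·z)/(3 - (a+3)·z) satisfies w^3 - 3w = (2a^2 + 6a - 9)/(a^2 + 3a + 9). -/
open Polynomial

theorem stmt12 {F L : Type*} [Field F] [Field L] [Algebra F L] (h3 : (3 : F) ≠ 0)
    (a : F) (hirr : Irreducible (X ^ 3 + C a * X ^ 2 - C (a + 3) * X + 1 : F[X]))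
    (z : L) (hgen : Algebra.adjoin F {z} = ⊤)
    (hz : z ^ 3 + algebraMap F L a * z ^ 2 - algebraMap F L (a + 3) * z + 1 = 0) :
    a ^ 2 + 3 * a + 9 ≠ 0 ∧ 3 - algebraMap F L (a + 3) * z ≠ 0 ∧
      ((3 + algebraMap F L a * z) / (3 - algebraMap F L (a + 3) * z)) ^ 3 -
          3 * ((3 + algebraMap F L a * z) / (3 - algebraMap F L (a + 3) * z)) =
        algebraMap F L ((2 * a ^ 2 + 6 * a - 9) / (a ^ 2 + 3 * a + 9)) := by
  have hinj : Function.Injective (algebraMap F L) := (algebraMap F L).injective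
  -- the polynomial has no roots in F
  have noRoot : ∀ r : F, r ^ 3 + a * r ^ 2 - (a + 3) * r + 1 ≠ 0 := by
    intro r hr
    have hroot : (X ^ 3 + C a * X ^ 2 - C (a + 3) * X + 1 : F[X]).IsRoot r := by
      simp [IsRoot, hr]
    obtain ⟨q, hq⟩ := dvd_iff_isRoot.mpr hroot
    rcases hirr.isUnit_or_isUnit hq with h | h
    · exact Polynomial.not_isUnit_X_sub_C r h
    · have hdeg : (X ^ 3 + C a * X ^ 2 - C (a + 3) * X + 1 : F[X]).natDegree = 3 := by
        compute_degree!
      rw [hq, natDegree_mul (X_sub_C_ne_zero r) h.ne_zero, natDegree_X_sub_C,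
        natDegree_eq_zero_of_isUnit h] at hdeg
      simp at hdeg
  have h27 : (27 : F) ≠ 0 := by
    have : (27 : F) = 3 ^ 3 := by norm_num
    rw [this]; exact pow_ne_zero _ h3
  -- part 1
  have part1 : a ^ 2 + 3 * a + 9 ≠ 0 := by
    intro hc
    set r : F := 3⁻¹ * (-a) with hrdef
    have hr : (3 : F) * r + a = 0 := by rw [hrdef, ← mul_assoc, mul_inv_cancel₀ h3, one_mul, neg_add_cancel]
    apply noRoot r
    have key : (27 : F) * (r ^ 3 + a * r ^ 2 - (a + 3) * r + 1) = 0 := by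
      linear_combination (2 * a + 3) * hc + (9 * r ^ 2 + 6 * a * r - 2 * a ^ 2 - 9 * a - 27) * hr
    exact (mul_eq_zero.mp key).resolve_left h27
  have h3L : (3 : L) ≠ 0 := by
    intro h
    apply h3
    apply hinj
    rw [map_zero, map_ofNat]
    exact h
  -- part 2
  have part2 : 3 - algebraMap F L (a + 3) * z ≠ 0 := by
    intro hD0
    have ha3 : a + 3 ≠ 0 := by
      intro h
      rw [h, map_zero, zero_mul, sub_zero] at hD0
      exact h3L hD0
    have hm : algebraMap F L (a + 3) ≠ 0 := fun h => ha3 (hinj (by rw [h, map_zero]))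
    have hzc : z = algebraMap F L (3 / (a + 3)) := by
      rw [map_div₀, map_ofNat, eq_div_iff hm]
      linear_combination -hD0
    set c : F := 3 / (a + 3) with hcdef
    apply noRoot c
    apply hinj
    rw [map_zero]
    rw [hzc] at hz
    rw [map_add, map_sub, map_add, map_mul, map_mul, map_pow, map_pow, map_one]
    exact hz
  refine ⟨part1, part2, ?_⟩
  -- part 3
  have hQL : algebraMap F L (a ^ 2 + 3 * a + 9) ≠ 0 :=
    fun h => part1 (hinj (by rw [h, map_zero]))
  rw [map_div₀]
  simp only [map_add, map_sub, map_mul, map_pow, map_one, map_ofNat] at hz hQL part2 ⊢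
  set x := algebraMap F L a with hx
  field_simp
  rw [div_eq_div_iff (pow_ne_zero _ (by intro h; exact part2 (by linear_combination h))) (by intro h; exact hQL (by linear_combination h))]
  linear_combination (-108 * x ^ 2 - 324 * x - 243) * hz
end
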